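/- Let 1 < p_1,…,p_m < ∞ and f ∈ ℝ^{d_1×…×d_m} a nonnegative weakly irreducible tensor. Suppose there exists i ∈ [m] such that (m−1)p_i' ≤ p_k for every k ∈ [m]\{i}. Then f has a singular vector x* ∈ S^d_{++} (all entries strictly positive) with Q(x*) = ‖f‖_{p_1,…,p_m}. -/

import Mathlib

/-!
Common setup: tensors `f : (∀ i, Fin (d i)) → ℝ`, the induced multilinear form,
partial gradients, `ψ_q`, `ℓ^p` norms, Hölder conjugates, singular vectors,
(weak) irreducibility, the maps `σ_i`, `s_{i,k}`, `T_α`, `G`, the quantities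
`Q`, `‖f‖_{p_1,…,p_m}`, `Q_i`, `γ_i^±` and the Hilbert-type metric `μ`.
Points of `ℝ^{d-d_i}` are encoded as full tuples (the maps involved do not
depend on the `i`-th component), with conditions imposed only for `k ≠ i`.
-/

open Finset Filter

noncomputable section

namespace TensorPF

variable {m : ℕ} {d : Fin m → ℕ}

/-- The multilinear form induced by the tensor `f`. -/
def form (f : (∀ i, Fin (d i)) → ℝ) (x : ∀ i, Fin (d i) → ℝ) : ℝ :=
  ∑ j : ∀ i, Fin (d i), f j * ∏ i, x i (j i)

/-- The gradient of the multilinear form in its `i`-th argument. -/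
def grad (f : (∀ i, Fin (d i)) → ℝ) (i : Fin m) (x : ∀ i, Fin (d i) → ℝ) :
    Fin (d i) → ℝ :=
  fun ji => form f (Function.update x i (fun l => if l = ji then (1 : ℝ) else 0))

/-- `ψ_q(y)_j = |y_j|^(q-1) sign(y_j)`. -/
def psi (q : ℝ) {n : ℕ} (y : Fin n → ℝ) : Fin n → ℝ :=
  fun j => |y j| ^ (q - 1) * Real.sign (y j)

/-- The `ℓ^q`-norm on `Fin n → ℝ`. -/
def pnorm (q : ℝ) {n : ℕ} (y : Fin n → ℝ) : ℝ :=
  (∑ j, |y j| ^ q) ^ (1 / q)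

/-- The Hölder conjugate `q' = q/(q-1)`. -/
def conjExp (q : ℝ) : ℝ := q / (q - 1)

/-- `σ_i(x) = sign(f(x)) ψ_{p_i'}(∇_i f(x))`. -/
def sigma (f : (∀ i, Fin (d i)) → ℝ) (p : Fin m → ℝ) (i : Fin m)
    (x : ∀ i, Fin (d i) → ℝ) : Fin (d i) → ℝ :=
  fun ji => Real.sign (form f x) * psi (conjExp (p i)) (grad f i x) ji

/-- `Q(x) = |f(x)| / ∏ i ‖x_i‖_{p_i}`. -/
def Qform (f : (∀ i, Fin (d i)) → ℝ) (p : Fin m → ℝ)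
    (x : ∀ i, Fin (d i) → ℝ) : ℝ :=
  |form f x| / ∏ i, pnorm (p i) (x i)

/-- The projective tensor norm `‖f‖_{p_1,…,p_m} = sup Q`. -/
def tnorm (f : (∀ i, Fin (d i)) → ℝ) (p : Fin m → ℝ) : ℝ :=
  sSup {q : ℝ | ∃ x : ∀ i, Fin (d i) → ℝ, (∀ i, x i ≠ 0) ∧ q = Qform f p x}

/-- `x ∈ S^d` is a singular vector of `f` with singular value `lam` if
`σ_i(x) = lam^{p_i'-1} x_i` for all `i`. -/
def IsSingular (f : (∀ i, Fin (d i)) → ℝ) (p : Fin m → ℝ) (lam : ℝ)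
    (x : ∀ i, Fin (d i) → ℝ) : Prop :=
  (∀ i, pnorm (p i) (x i) = 1) ∧
  ∀ i ji, sigma f p i x ji = lam ^ (conjExp (p i) - 1) * x i ji

/-- `s_{i,k}(x) = ψ_{p_k'}(∇_k f(x_1,…,ψ_{p_i'}(∇_i f(x)),…,x_m))`. -/
def sik (f : (∀ i, Fin (d i)) → ℝ) (p : Fin m → ℝ) (i k : Fin m)
    (x : ∀ l, Fin (d l) → ℝ) : Fin (d k) → ℝ :=
  psi (conjExp (p k))
    (grad f k (Function.update x i (psi (conjExp (p i)) (grad f i x))))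

/-- The `m`-partite graph associated to a nonnegative tensor. -/
def wGraph (f : (∀ i, Fin (d i)) → ℝ) : SimpleGraph ((k : Fin m) × Fin (d k)) where
  Adj a b := a.1 ≠ b.1 ∧ ∃ j : ∀ l, Fin (d l), j a.1 = a.2 ∧ j b.1 = b.2 ∧ 0 < f j
  symm := ⟨by
    rintro a b ⟨h, j, h1, h2, h3⟩
    exact ⟨h.symm, j, h2, h1, h3⟩⟩
  loopless := ⟨by rintro a ⟨h, -⟩; exact h rfl⟩

/-- `f ≥ 0` is weakly irreducible if its graph is connected. -/
def WeaklyIrreducible (f : (∀ i, Fin (d i)) → ℝ) : Prop := (wGraph f).Connected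

/-- `f ≥ 0` is irreducible. -/
def Irreducible (f : (∀ i, Fin (d i)) → ℝ) : Prop :=
  ∀ J : Set ((k : Fin m) × Fin (d k)), J.Nonempty → J ≠ Set.univ →
    ∃ (k : Fin m) (j : ∀ l, Fin (d l)),
      (⟨k, j k⟩ : (l : Fin m) × Fin (d l)) ∈ J ∧
      (∀ l, l ≠ k → (⟨l, j l⟩ : (l : Fin m) × Fin (d l)) ∉ J) ∧ 0 < f j

/-- `T_α(z) = α_0 z + (α_1 σ_1(z),…,α_m σ_m(z))`. -/
def Tmap (f : (∀ i, Fin (d i)) → ℝ) (p : Fin m → ℝ) (a0 : ℝ) (a : Fin m → ℝ)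
    (z : ∀ i, Fin (d i) → ℝ) : ∀ i, Fin (d i) → ℝ :=
  fun i ji => a0 * z i ji + a i * sigma f p i z ji

/-- `Q_i(x) = ‖∇_i f(x)‖_{p_i'} / ∏_{k ≠ i} ‖x_k‖_{p_k}`. -/
def Qi (f : (∀ i, Fin (d i)) → ℝ) (p : Fin m → ℝ) (i : Fin m)
    (x : ∀ l, Fin (d l) → ℝ) : ℝ :=
  pnorm (conjExp (p i)) (grad f i x) / ∏ k ∈ Finset.univ.erase i, pnorm (p k) (x k)

/-- A critical point of `Q_i` with critical value `lam`. -/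
def IsCritQi (f : (∀ i, Fin (d i)) → ℝ) (p : Fin m → ℝ) (i : Fin m) (lam : ℝ)
    (x : ∀ l, Fin (d l) → ℝ) : Prop :=
  (∀ k, k ≠ i → pnorm (p k) (x k) = 1) ∧ grad f i x ≠ 0 ∧
  ∀ k, k ≠ i → ∀ jk,
    sik f p i k x jk = lam ^ (conjExp (p i) * (conjExp (p k) - 1)) * x k jk

/-- Collatz–Wielandt ratio `γ_i^-`. -/
def gammaMinus (f : (∀ i, Fin (d i)) → ℝ) (p : Fin m → ℝ) (i : Fin m)
    (x : ∀ l, Fin (d l) → ℝ) : ℝ :=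
  ∏ k ∈ Finset.univ.erase i, ⨅ jk : Fin (d k), (sik f p i k x jk / x k jk) ^ (p k - 1)

/-- Collatz–Wielandt ratio `γ_i^+`. -/
def gammaPlus (f : (∀ i, Fin (d i)) → ℝ) (p : Fin m → ℝ) (i : Fin m)
    (x : ∀ l, Fin (d l) → ℝ) : ℝ :=
  ∏ k ∈ Finset.univ.erase i, ⨆ jk : Fin (d k), (sik f p i k x jk / x k jk) ^ (p k - 1)

/-- The power-method map `G(x) = (s_{i,k}(x)/‖s_{i,k}(x)‖_{p_k})_{k≠i}`. -/
def Gmap (f : (∀ i, Fin (d i)) → ℝ) (p : Fin m → ℝ) (i : Fin m)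
    (x : ∀ l, Fin (d l) → ℝ) : ∀ l, Fin (d l) → ℝ :=
  fun k jk => sik f p i k x jk / pnorm (p k) (sik f p i k x)

/-- The Hilbert-type metric `μ` on `S^{d-d_i}_{++}`. -/
def mu (p : Fin m → ℝ) (i : Fin m) (x y : ∀ l, Fin (d l) → ℝ) : ℝ :=
  Real.log (∏ l ∈ Finset.univ.erase i,
    (⨆ jl : Fin (d l), (x l jl / y l jl) ^ (p l - 1)) /
    (⨅ jl : Fin (d l), (x l jl / y l jl) ^ (p l - 1)))

/-!
Maximize the multilinear form over the nonnegative part of `S^d`, a compact set. As `f ≥ 0`,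
the maximum `λ` equals `‖f‖_{p_1,…,p_m}`, and by homogeneity `f(x) ≤ λ ∏ ‖x_l‖_{p_l}` for all
nonnegative `x`. If a maximizer `x` had a zero entry, weak irreducibility would give an entry
`f_j > 0` with `x_l(j_l) = 0` exactly for `l` in a nonempty proper set `L` of blocks. Raising these
entries to `ε^{s_l}` increases `f(x)` by a multiple of `ε^{∑_{l∈L} s_l}`, while the norms grow
only by `O(ε)` as soon as `s_l p_l ≥ 1`; the hypothesis `(m-1) p_i' ≤ p_k` is what makes weights
with `∑_{l∈L} s_l < 1` possible, so small `ε` contradicts maximality. At a positive maximizer the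
Lagrange conditions `∇_l f(x) = λ x_l^{p_l-1}` hold, and applying `ψ_{p_l'}` turns them into the
singular vector equations.
-/

open Function Topology

lemma sub_one_mul_conjExp_sub_one {q : ℝ} (hq : 1 < q) : (q - 1) * (conjExp q - 1) = 1 := by
  unfold conjExp
  field_simp [(sub_pos.2 hq).ne']
  ring

lemma one_lt_conjExp {q : ℝ} (hq : 1 < q) : 1 < conjExp q :=
  (Real.HolderConjugate.conjExponent hq).symm.lt

lemma one_add_pow_le_one_add_mul {u : ℝ} (h0 : 0 ≤ u) (h1 : u ≤ 1) (n : ℕ) :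
    (1 + u) ^ n ≤ 1 + (2 ^ n - 1) * u := by
  have := (convexOn_pow n).2 (Set.mem_Ici.2 (zero_le_one' ℝ)) (Set.mem_Ici.2 zero_le_two)
    (sub_nonneg.2 h1) h0 (sub_add_cancel 1 u)
  simp only [smul_eq_mul, one_pow, mul_one] at this
  calc (1 + u) ^ n = (1 - u + u * 2) ^ n := by ring
    _ ≤ 1 - u + u * 2 ^ n := this
    _ = 1 + (2 ^ n - 1) * u := by ring

lemma exists_mul_lt_mul_rpow {K C g : ℝ} (hC : 0 < C) (hg : g < 1) :
    ∃ ε, 0 < ε ∧ ε ≤ 1 ∧ K * ε < C * ε ^ g := by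
  have hlim : Tendsto (fun ε : ℝ => K * ε ^ (1 - g)) (𝓝[>] 0) (𝓝 0) := by
    have := (Real.continuousAt_rpow_const 0 (1 - g) (Or.inr (by linarith))).tendsto.const_mul K
    simpa [Real.zero_rpow (by linarith : (1 - g) ≠ 0)] using this.mono_left nhdsWithin_le_nhds
  obtain ⟨ε, hεC, hε0, hε1⟩ :=
    ((hlim.eventually (gt_mem_nhds hC)).and (Ioc_mem_nhdsGT zero_lt_one)).exists
  refine ⟨ε, hε0, hε1, ?_⟩
  calc K * ε = K * ε ^ (1 - g) * ε ^ g := by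
        rw [mul_assoc, ← Real.rpow_add hε0, sub_add_cancel, Real.rpow_one]
    _ < C * ε ^ g := mul_lt_mul_of_pos_right hεC (by positivity)

section PNorm

variable {q : ℝ} {n : ℕ}

lemma pnorm_nonneg (q : ℝ) (y : Fin n → ℝ) : 0 ≤ pnorm q y := by
  unfold pnorm; positivity

lemma pnorm_abs (q : ℝ) (y : Fin n → ℝ) : pnorm q (fun j => |y j|) = pnorm q y := by
  simp [pnorm]

lemma pnorm_pos {y : Fin n → ℝ} (hy : y ≠ 0) : 0 < pnorm q y := by
  obtain ⟨j, hj⟩ := Function.ne_iff.1 hy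
  have : 0 < ∑ k, |y k| ^ q :=
    sum_pos' (fun k _ => by positivity) ⟨j, mem_univ j, Real.rpow_pos_of_pos (abs_pos.2 hj) q⟩
  unfold pnorm; positivity

lemma ne_zero_of_pnorm_eq_one (hq : 0 < q) {y : Fin n → ℝ} (h : pnorm q y = 1) : y ≠ 0 := by
  rintro rfl
  simp [pnorm, Real.zero_rpow hq.ne', Real.zero_rpow (inv_ne_zero hq.ne')] at h

lemma pnorm_const_mul (hq : 0 < q) {c : ℝ} (hc : 0 ≤ c) (y : Fin n → ℝ) :
    pnorm q (fun j => c * y j) = c * pnorm q y := by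
  simp only [pnorm, abs_mul, abs_of_nonneg hc, Real.mul_rpow hc (abs_nonneg _), ← mul_sum]
  rw [Real.mul_rpow (by positivity) (by positivity), ← Real.rpow_mul hc,
    mul_one_div_cancel hq.ne', Real.rpow_one]

lemma abs_le_pnorm (hq : 0 < q) (y : Fin n → ℝ) (j : Fin n) : |y j| ≤ pnorm q y := by
  have h : |y j| ^ q ≤ ∑ k, |y k| ^ q :=
    single_le_sum (f := fun k => |y k| ^ q) (fun k _ => by positivity) (mem_univ j)
  calc |y j| = (|y j| ^ q) ^ (1 / q) := by
        rw [← Real.rpow_mul (abs_nonneg _), mul_one_div_cancel hq.ne', Real.rpow_one]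
    _ ≤ pnorm q y := Real.rpow_le_rpow (by positivity) h (by positivity)

lemma continuous_pnorm (hq : 0 < q) : Continuous (pnorm (n := n) q) := by
  unfold pnorm
  exact (Real.continuous_rpow_const (by positivity)).comp
    (continuous_finsetSum _ fun j _ =>
      (Real.continuous_rpow_const hq.le).comp (continuous_apply j).abs)

lemma pnorm_single (hq : 0 < q) (j : Fin n) : pnorm q (Pi.single j 1) = 1 := by
  simp [pnorm, Pi.single_apply, apply_ite, Real.zero_rpow hq.ne']

lemma sum_apply_update (g : Fin n → ℝ → ℝ) (x : Fin n → ℝ) (j : Fin n) (t : ℝ) :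
    ∑ k, g k (update x j t k) = ∑ k, g k (x k) - g j (x j) + g j t := by
  rw [sum_eq_add_sum_sdiff_singleton_of_mem (mem_univ j),
    sum_eq_add_sum_sdiff_singleton_of_mem (mem_univ j) (fun k => g k (x k)), update_self,
    sum_congr rfl fun k hk => by rw [update_of_ne (by simpa using hk)]]
  ring

lemma pnorm_update_of_pnorm_eq_one (hq : q ≠ 0) {x : Fin n → ℝ} (hx : pnorm q x = 1)
    (j : Fin n) (t : ℝ) :
    pnorm q (update x j t) = (1 - |x j| ^ q + |t| ^ q) ^ (1 / q) := by
  have hsum : ∑ k, |x k| ^ q = 1 := by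
    rw [← Real.rpow_inv_rpow (x := ∑ k, |x k| ^ q) (by positivity) hq, ← one_div]
    exact (congrArg (· ^ q) hx).trans (Real.one_rpow q)
  rw [pnorm, sum_apply_update (fun _ s => |s| ^ q), hsum]

lemma pnorm_update_le (hq : 1 ≤ q) {x : Fin n → ℝ} (hx : pnorm q x = 1) {j : Fin n}
    (hxj : x j = 0) {t : ℝ} (ht : 0 ≤ t) : pnorm q (update x j t) ≤ 1 + t ^ q := by
  rw [pnorm_update_of_pnorm_eq_one (by positivity) hx, hxj, abs_zero,
    Real.zero_rpow (by positivity), sub_zero, abs_of_nonneg ht]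
  calc (1 + t ^ q) ^ (1 / q) ≤ (1 + t ^ q) ^ (1 : ℝ) :=
        Real.rpow_le_rpow_of_exponent_le (by simp; positivity)
          ((div_le_one (by positivity)).2 hq)
    _ = 1 + t ^ q := Real.rpow_one _

end PNorm

lemma eq_mul_rpow_of_sum_mul_le_mul_pnorm {q : ℝ} (hq : 0 < q) {n : ℕ} {x c : Fin n → ℝ}
    {lam : ℝ} (hx : ∀ j, 0 < x j) (hx1 : pnorm q x = 1) (heq : ∑ j, x j * c j = lam)
    (hle : ∀ y : Fin n → ℝ, (∀ j, 0 < y j) → ∑ j, y j * c j ≤ lam * pnorm q y) (j : Fin n) :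
    c j = lam * x j ^ (q - 1) := by
  set a := x j
  have ha : 0 < a := hx j
  set φ : ℝ → ℝ := fun t => t * c j - lam * (1 - a ^ q + (a + t) ^ q) ^ (1 / q)
  have hmax : IsLocalMax φ 0 := by
    filter_upwards [Ioi_mem_nhds (neg_lt_zero.2 ha)] with t ht
    have hat : 0 < a + t := by linarith [Set.mem_Ioi.1 ht]
    have hy : ∀ k, 0 < update x j (a + t) k := fun k => by
      rcases eq_or_ne k j with rfl | hk
      · rwa [update_self]
      · rw [update_of_ne hk]; exact hx k
    -- `hle` at `update x j (a + t)` says exactly `φ t ≤ φ 0`.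
    have h := hle _ hy
    rw [sum_apply_update (fun k s => s * c k), heq, pnorm_update_of_pnorm_eq_one hq.ne' hx1,
      abs_of_pos ha, abs_of_pos hat] at h
    simp only [φ, add_zero, sub_add_cancel, Real.one_rpow, mul_one, zero_mul, zero_sub]
    linarith
  have hderiv : HasDerivAt φ (c j - lam * a ^ (q - 1)) 0 := by
    have hin : HasDerivAt (fun t => 1 - a ^ q + (a + t) ^ q) (q * a ^ (q - 1)) 0 := by
      simpa using (((hasDerivAt_id (0 : ℝ)).const_add a).rpow_const (p := q)
        (Or.inl (by simpa using ha.ne'))).const_add (1 - a ^ q)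
    have hout := hin.rpow_const (p := 1 / q) (Or.inl (by simp))
    refine ((hasDerivAt_mul_const (c j)).sub (hout.const_mul lam)).congr_deriv ?_
    rw [add_zero, sub_add_cancel, Real.one_rpow, mul_one, mul_right_comm,
      mul_one_div_cancel hq.ne', one_mul]
  have := hmax.hasDerivAt_eq_zero hderiv
  linarith

section Form

variable {m : ℕ} {d : Fin m → ℕ} {f : (∀ i, Fin (d i)) → ℝ}

lemma form_nonneg (hf : ∀ j, 0 ≤ f j) {x : ∀ i, Fin (d i) → ℝ} (hx : ∀ l j, 0 ≤ x l j) :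
    0 ≤ form f x :=
  sum_nonneg fun j _ => mul_nonneg (hf j) (prod_nonneg fun l _ => hx l (j l))

lemma abs_form_le (hf : ∀ j, 0 ≤ f j) (x : ∀ i, Fin (d i) → ℝ) :
    |form f x| ≤ form f (fun l j => |x l j|) := by
  refine (abs_sum_le_sum_abs _ _).trans_eq (sum_congr rfl fun j _ => ?_)
  rw [abs_mul, abs_of_nonneg (hf j), abs_prod]

lemma form_const_mul (f : (∀ i, Fin (d i)) → ℝ) (c : Fin m → ℝ) (x : ∀ i, Fin (d i) → ℝ) :
    form f (fun l j => c l * x l j) = (∏ l, c l) * form f x := by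
  simp only [form, mul_sum, prod_mul_distrib]
  exact sum_congr rfl fun j _ => by ring

lemma continuous_form (f : (∀ i, Fin (d i)) → ℝ) : Continuous (form f) := by
  unfold form
  fun_prop

lemma form_update_eq_sum (f : (∀ i, Fin (d i)) → ℝ) (x : ∀ i, Fin (d i) → ℝ) (i : Fin m)
    (y : Fin (d i) → ℝ) :
    form f (update x i y) = ∑ j, f j * (y (j i) * ∏ l ∈ univ.erase i, x l (j l)) := by
  refine sum_congr rfl fun j _ => ?_
  rw [← mul_prod_erase univ _ (mem_univ i), update_self]
  congr 2
  exact prod_congr rfl fun l hl => by rw [update_of_ne (ne_of_mem_erase hl)]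

lemma form_update (f : (∀ i, Fin (d i)) → ℝ) (x : ∀ i, Fin (d i) → ℝ) (i : Fin m)
    (y : Fin (d i) → ℝ) :
    form f (update x i y) = ∑ ji, y ji * grad f i x ji := by
  simp only [grad, form_update_eq_sum, mul_sum]
  rw [sum_comm]
  refine sum_congr rfl fun j _ => ?_
  simp only [ite_mul, one_mul, zero_mul, mul_ite, mul_zero, sum_ite_eq]
  simp [mul_left_comm]

lemma form_add_le (hf : ∀ j, 0 ≤ f j) {x y : ∀ i, Fin (d i) → ℝ} (hx : ∀ l j, 0 ≤ x l j)
    (hxy : ∀ l j, x l j ≤ y l j) (j : ∀ i, Fin (d i)) :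
    form f x + f j * (∏ l, y l (j l) - ∏ l, x l (j l)) ≤ form f y := by
  have hterm : ∀ j, 0 ≤ f j * (∏ l, y l (j l) - ∏ l, x l (j l)) := fun j =>
    mul_nonneg (hf j) (sub_nonneg.2 (prod_le_prod (fun l _ => hx l (j l)) fun l _ => hxy l (j l)))
  have hsum : form f y - form f x = ∑ j, f j * (∏ l, y l (j l) - ∏ l, x l (j l)) := by
    simp only [form, ← sum_sub_distrib, mul_sub]
  linarith [single_le_sum (fun j _ => hterm j) (mem_univ j)]

end Form

section Maximizer

variable {m : ℕ} {d : Fin m → ℕ} {p : Fin m → ℝ} {f : (∀ i, Fin (d i)) → ℝ}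

def sphereNonneg (p : Fin m → ℝ) : Set (∀ i, Fin (d i) → ℝ) :=
  {x | (∀ l j, 0 ≤ x l j) ∧ ∀ l, pnorm (p l) (x l) = 1}

lemma isCompact_sphereNonneg (hp : ∀ l, 0 < p l) : IsCompact (sphereNonneg (d := d) p) := by
  have hclosed : IsClosed (sphereNonneg (d := d) p) := by
    simp only [sphereNonneg, Set.ofPred_and, Set.ofPred_forall]
    exact (isClosed_iInter fun l => isClosed_iInter fun j =>
        isClosed_le continuous_const (by fun_prop)).inter
      (isClosed_iInter fun l => isClosed_eq ((continuous_pnorm (hp l)).comp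
        (continuous_apply l)) continuous_const)
  refine (isCompact_univ_pi fun l => isCompact_closedBall (0 : Fin (d l) → ℝ) 1).of_isClosed_subset
    hclosed fun x hx => Set.mem_univ_pi.2 fun l => ?_
  rw [mem_closedBall_zero_iff, pi_norm_le_iff_of_nonneg zero_le_one]
  exact fun j => (abs_le_pnorm (hp l) _ j).trans_eq (hx.2 l)

lemma sphereNonneg_nonempty (hd : ∀ k, 0 < d k) (hp : ∀ l, 0 < p l) :
    (sphereNonneg (d := d) p).Nonempty :=
  ⟨fun l => Pi.single ⟨0, hd l⟩ 1, fun l j => by simp [Pi.single_apply, apply_ite],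
    fun l => pnorm_single (hp l) _⟩

lemma exists_isMaxOn_form (hd : ∀ k, 0 < d k) (hp : ∀ l, 0 < p l) (f : (∀ i, Fin (d i)) → ℝ) :
    ∃ xs ∈ sphereNonneg p, IsMaxOn (form f) (sphereNonneg p) xs :=
  (isCompact_sphereNonneg hp).exists_isMaxOn (sphereNonneg_nonempty hd hp)
    (continuous_form f).continuousOn

lemma Qform_eq_abs_form {x : ∀ i, Fin (d i) → ℝ} (hx : ∀ l, pnorm (p l) (x l) = 1) :
    Qform f p x = |form f x| := by
  simp [Qform, hx]

variable {xs : ∀ i, Fin (d i) → ℝ}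

lemma form_le_mul_prod_pnorm (hp : ∀ l, 0 < p l) (hmax : IsMaxOn (form f) (sphereNonneg p) xs)
    {x : ∀ i, Fin (d i) → ℝ} (hx : ∀ l j, 0 ≤ x l j) (hx0 : ∀ l, x l ≠ 0) :
    form f x ≤ form f xs * ∏ l, pnorm (p l) (x l) := by
  set N := fun l => pnorm (p l) (x l)
  have hN : ∀ l, 0 < N l := fun l => pnorm_pos (hx0 l)
  have hw : (fun l j => (N l)⁻¹ * x l j) ∈ sphereNonneg p :=
    ⟨fun l j => mul_nonneg (inv_nonneg.2 (hN l).le) (hx l j), fun l => by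
      rw [pnorm_const_mul (hp l) (inv_nonneg.2 (hN l).le), inv_mul_cancel₀ (hN l).ne']⟩
  have hle : (∏ l, (N l)⁻¹) * form f x ≤ form f xs := form_const_mul f _ x ▸ hmax hw
  rw [prod_inv_distrib, inv_mul_le_iff₀ (prod_pos fun l _ => hN l)] at hle
  linarith

lemma tnorm_eq_of_isMaxOn (hf : ∀ j, 0 ≤ f j) (hp : ∀ l, 0 < p l) (hxs : xs ∈ sphereNonneg p)
    (hmax : IsMaxOn (form f) (sphereNonneg p) xs) : tnorm f p = form f xs := by
  refine IsGreatest.csSup_eq ⟨⟨xs, fun l => ne_zero_of_pnorm_eq_one (hp l) (hxs.2 l), ?_⟩, ?_⟩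
  · rw [Qform_eq_abs_form hxs.2, abs_of_nonneg (form_nonneg hf hxs.1)]
  rintro _ ⟨x, hx0, rfl⟩
  have habs0 : ∀ l, (fun j => |x l j|) ≠ 0 := fun l h =>
    hx0 l (funext fun j => abs_eq_zero.1 (congrFun h j))
  have hle := (abs_form_le hf x).trans
    (form_le_mul_prod_pnorm hp hmax (fun l j => abs_nonneg (x l j)) habs0)
  simp only [pnorm_abs] at hle
  exact div_le_of_le_mul₀ (prod_nonneg fun l _ => pnorm_nonneg _ _)
    (form_nonneg hf hxs.1) hle

end Maximizer

lemma exists_weights_sum_lt_one {m : ℕ} {p : Fin m → ℝ} {i : Fin m} (hpi1 : 1 < p i)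
    (hpi : ∀ k, k ≠ i → ((m : ℝ) - 1) * conjExp (p i) ≤ p k) {L : Finset (Fin m)}
    (hL : L ≠ univ) :
    ∃ s : Fin m → ℝ, (∀ l, 1 ≤ s l * p l) ∧ ∑ l ∈ L, s l < 1 := by
  set P := ((m : ℝ) - 1) * conjExp (p i)
  have hP : ∀ k, k ≠ i → 0 < P := fun k hk => by
    have : 2 ≤ m := by have := k.isLt; have := i.isLt; have := Fin.val_ne_of_ne hk; omega
    have : (2 : ℝ) ≤ m := by exact_mod_cast this
    exact mul_pos (by linarith) (by linarith [one_lt_conjExp hpi1])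
  -- These weights sum to `1/p_i + 1/p_i' = 1` over all blocks, and `L` misses one of them.
  set s : Fin m → ℝ := fun l => if l = i then (p i)⁻¹ else P⁻¹
  have hs : ∀ l, 0 < s l := fun l => by
    by_cases h : l = i
    · simp only [s, h, if_true]; linarith [inv_pos.2 (zero_lt_one.trans hpi1)]
    · simp only [s, h, if_false]; exact inv_pos.2 (hP l h)
  refine ⟨s, fun l => ?_, ?_⟩
  · by_cases h : l = i
    · subst h; simp [s, (zero_lt_one.trans hpi1).ne']
    · simp only [s, h, if_false]
      rw [le_inv_mul_iff₀ (hP l h), mul_one]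
      exact hpi l h
  obtain ⟨k, hk⟩ : ∃ k, k ∉ L := by
    by_contra! h
    exact hL (eq_univ_of_forall h)
  have hconj := Real.HolderConjugate.conjExponent hpi1
  calc ∑ l ∈ L, s l < ∑ l, s l :=
        sum_lt_sum_of_subset (subset_univ L) (mem_univ k) hk (hs k) fun l _ _ => (hs l).le
    _ = (p i)⁻¹ + ((m : ℝ) - 1) / ((m : ℝ) - 1) * (conjExp (p i))⁻¹ := by
        rw [sum_eq_add_sum_sdiff_singleton_of_mem (mem_univ i),
          sum_congr rfl fun l hl => if_neg (by simpa using hl), sum_const, card_univ_sdiff,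
          Fintype.card_fin, card_singleton, nsmul_eq_mul, Nat.cast_sub i.pos, Nat.cast_one]
        simp only [s, P, if_true, mul_inv, div_eq_mul_inv, mul_assoc]
    _ ≤ (p i)⁻¹ + 1 * (conjExp (p i))⁻¹ := by
        gcongr
        · exact hconj.symm.inv_nonneg
        · exact div_self_le_one _
    _ = 1 := by rw [one_mul]; exact hconj.inv_add_inv_eq_one

section Positivity

variable {m : ℕ} {d : Fin m → ℕ} {p : Fin m → ℝ} {f : (∀ i, Fin (d i)) → ℝ}
  {xs : ∀ i, Fin (d i) → ℝ}

lemma WeaklyIrreducible.exists_pos_of_eq_zero (hirr : WeaklyIrreducible f)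
    {x : ∀ i, Fin (d i) → ℝ} (hx : ∀ l, x l ≠ 0) {l₀ : Fin m} {j₀ : Fin (d l₀)}
    (h₀ : x l₀ j₀ = 0) :
    ∃ j, 0 < f j ∧ (∃ l, x l (j l) = 0) ∧ ∃ l, x l (j l) ≠ 0 := by
  obtain ⟨j₁, h₁⟩ := Function.ne_iff.1 (hx l₀)
  obtain ⟨w⟩ := hirr.preconnected ⟨l₀, j₀⟩ ⟨l₀, j₁⟩
  obtain ⟨e, -, he₁, he₂⟩ := w.exists_boundary_dart {v | x v.1 v.2 = 0} h₀ h₁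
  obtain ⟨-, j, hj₁, hj₂, hfj⟩ := e.adj
  exact ⟨j, hfj, ⟨e.fst.1, by rw [hj₁]; exact he₁⟩, ⟨e.snd.1, by rw [hj₂]; exact he₂⟩⟩

lemma form_add_le_mul_one_add_pow (hp : ∀ l, 1 ≤ p l) (hf : ∀ j, 0 ≤ f j)
    (hxs : xs ∈ sphereNonneg p) (hmax : IsMaxOn (form f) (sphereNonneg p) xs)
    (j : ∀ i, Fin (d i)) {L : Finset (Fin m)} (hL : L.Nonempty)
    (hzero : ∀ l ∈ L, xs l (j l) = 0) {s : Fin m → ℝ} (hs : ∀ l, 1 ≤ s l * p l)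
    {ε : ℝ} (hε0 : 0 < ε) (hε1 : ε ≤ 1) :
    form f xs + (f j * ∏ l ∈ Lᶜ, xs l (j l)) * ε ^ ∑ l ∈ L, s l ≤
      form f xs * (1 + ε) ^ #L := by
  set y : ∀ l, Fin (d l) → ℝ := fun l => if l ∈ L then update (xs l) (j l) (ε ^ s l) else xs l
  have hyL : ∀ l ∈ L, y l = update (xs l) (j l) (ε ^ s l) := fun l hl => if_pos hl
  have hyLc : ∀ l ∉ L, y l = xs l := fun l hl => if_neg hl
  have hxy : ∀ l k, xs l k ≤ y l k := fun l k => by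
    by_cases hl : l ∈ L
    · rw [hyL l hl]
      rcases eq_or_ne k (j l) with rfl | hk
      · rw [update_self, hzero l hl]; positivity
      · rw [update_of_ne hk]
    · rw [hyLc l hl]
  have hy0 : ∀ l, y l ≠ 0 := fun l h => by
    by_cases hl : l ∈ L
    · have := congrFun h (j l)
      rw [hyL l hl, update_self] at this
      exact (Real.rpow_pos_of_pos hε0 _).ne' this
    · exact ne_zero_of_pnorm_eq_one (zero_lt_one.trans_le (hp l)) (hxs.2 l) (hyLc l hl ▸ h)
  have hprod_y : ∏ l, y l (j l) = ε ^ (∑ l ∈ L, s l) * ∏ l ∈ Lᶜ, xs l (j l) := by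
    rw [← prod_mul_prod_compl L, Real.rpow_sum_of_pos hε0]
    congr 1
    · exact prod_congr rfl fun l hl => by rw [hyL l hl, update_self]
    · exact prod_congr rfl fun l hl => by rw [hyLc l (mem_compl.1 hl)]
  have hprod_xs : ∏ l, xs l (j l) = 0 :=
    prod_eq_zero (mem_univ hL.choose) (hzero _ hL.choose_spec)
  have hnorm : ∏ l, pnorm (p l) (y l) ≤ (1 + ε) ^ #L := by
    have hLc : ∏ l ∈ Lᶜ, pnorm (p l) (y l) = 1 :=
      prod_eq_one fun l hl => by rw [hyLc l (mem_compl.1 hl)]; exact hxs.2 l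
    rw [← prod_mul_prod_compl L, hLc, mul_one, ← prod_const]
    refine prod_le_prod (fun l _ => pnorm_nonneg _ _) fun l hl => ?_
    rw [hyL l hl]
    refine (pnorm_update_le (hp l) (hxs.2 l) (hzero l hl) (by positivity)).trans ?_
    rw [← Real.rpow_mul hε0.le]
    gcongr
    exact (Real.rpow_le_rpow_of_exponent_ge hε0 hε1 (hs l)).trans_eq (Real.rpow_one ε)
  calc form f xs + (f j * ∏ l ∈ Lᶜ, xs l (j l)) * ε ^ ∑ l ∈ L, s l
      = form f xs + f j * (∏ l, y l (j l) - ∏ l, xs l (j l)) := by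
        rw [hprod_y, hprod_xs]; ring
    _ ≤ form f y := form_add_le hf hxs.1 hxy j
    _ ≤ form f xs * ∏ l, pnorm (p l) (y l) :=
        form_le_mul_prod_pnorm (fun l => zero_lt_one.trans_le (hp l)) hmax
          (fun l k => (hxs.1 l k).trans (hxy l k)) hy0
    _ ≤ form f xs * (1 + ε) ^ #L := mul_le_mul_of_nonneg_left hnorm (form_nonneg hf hxs.1)

lemma pos_of_isMaxOn_form (hp : ∀ k, 1 < p k) (hf : ∀ j, 0 ≤ f j)
    (hirr : WeaklyIrreducible f) {i : Fin m}
    (hpi : ∀ k, k ≠ i → ((m : ℝ) - 1) * conjExp (p i) ≤ p k)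
    (hxs : xs ∈ sphereNonneg p) (hmax : IsMaxOn (form f) (sphereNonneg p) xs) :
    ∀ l j, 0 < xs l j := by
  by_contra! ⟨l₀, j₀, h₀⟩
  obtain ⟨j, hfj, ⟨la, hla⟩, ⟨lb, hlb⟩⟩ :=
    hirr.exists_pos_of_eq_zero (fun l => ne_zero_of_pnorm_eq_one (zero_lt_one.trans (hp l))
      (hxs.2 l)) (le_antisymm h₀ (hxs.1 l₀ j₀))
  set L := univ.filter fun l => xs l (j l) = 0
  have hL : L.Nonempty := ⟨la, mem_filter.2 ⟨mem_univ _, hla⟩⟩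
  have hLu : L ≠ univ := fun h => hlb (mem_filter.1 (h.symm ▸ mem_univ lb : lb ∈ L)).2
  obtain ⟨s, hsp, hsL⟩ := exists_weights_sum_lt_one (hp i) hpi hLu
  set C := f j * ∏ l ∈ Lᶜ, xs l (j l)
  have hC : 0 < C := mul_pos hfj (prod_pos fun l hl =>
    (hxs.1 l (j l)).lt_of_ne' fun h => mem_compl.1 hl (mem_filter.2 ⟨mem_univ _, h⟩))
  obtain ⟨ε, hε0, hε1, hlt⟩ := exists_mul_lt_mul_rpow (K := form f xs * (2 ^ #L - 1)) hC hsL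
  have hgain : form f xs + C * ε ^ ∑ l ∈ L, s l ≤ form f xs * (1 + (2 ^ #L - 1) * ε) :=
    calc form f xs + C * ε ^ ∑ l ∈ L, s l ≤ form f xs * (1 + ε) ^ #L :=
          form_add_le_mul_one_add_pow (fun l => (hp l).le) hf hxs hmax j hL
            (fun l hl => (mem_filter.1 hl).2) hsp hε0 hε1
      _ ≤ form f xs * (1 + (2 ^ #L - 1) * ε) := mul_le_mul_of_nonneg_left
          (one_add_pow_le_one_add_mul hε0.le hε1 #L) (form_nonneg hf hxs.1)
  linarith

end Positivity

section Critical

variable {m : ℕ} {d : Fin m → ℕ} {p : Fin m → ℝ} {f : (∀ i, Fin (d i)) → ℝ}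
  {xs : ∀ i, Fin (d i) → ℝ}

lemma grad_eq_of_isMaxOn_form (hp : ∀ l, 0 < p l) (hxs : xs ∈ sphereNonneg p)
    (hmax : IsMaxOn (form f) (sphereNonneg p) xs) (hpos : ∀ l j, 0 < xs l j) (i : Fin m)
    (j : Fin (d i)) : grad f i xs j = form f xs * xs i j ^ (p i - 1) := by
  refine eq_mul_rpow_of_sum_mul_le_mul_pnorm (hp i) (hpos i) (hxs.2 i) ?_ (fun y hy => ?_) j
  · rw [← form_update, update_eq_self]
  rw [← form_update]
  refine (form_le_mul_prod_pnorm hp hmax (fun l k => ?_) (fun l => ?_)).trans_eq ?_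
  · rcases eq_or_ne l i with rfl | hl
    · rw [update_self]; exact (hy k).le
    · rw [update_of_ne hl]; exact hxs.1 l k
  · rcases eq_or_ne l i with rfl | hl
    · rw [update_self]; exact fun h => (hy j).ne' (congrFun h j)
    · rw [update_of_ne hl]; exact ne_zero_of_pnorm_eq_one (hp l) (hxs.2 l)
  · rw [prod_eq_single i (fun l _ hl => by rw [update_of_ne hl]; exact hxs.2 l)
      (fun h => absurd (mem_univ i) h), update_self]

lemma sigma_eq_of_grad_eq {x : ∀ i, Fin (d i) → ℝ} {i : Fin m} (hp : 1 < p i)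
    (hf : 0 ≤ form f x) (hx : ∀ j, 0 < x i j)
    (hgrad : ∀ j, grad f i x j = form f x * x i j ^ (p i - 1)) (j : Fin (d i)) :
    sigma f p i x j = form f x ^ (conjExp (p i) - 1) * x i j := by
  have hexp : 0 < conjExp (p i) - 1 := sub_pos.2 (one_lt_conjExp hp)
  simp only [sigma, psi, hgrad]
  rcases hf.eq_or_lt with h0 | hpos
  · simp [← h0, Real.zero_rpow hexp.ne']
  have hg : 0 < form f x * x i j ^ (p i - 1) := mul_pos hpos (by positivity [hx j])
  rw [Real.sign_of_pos hpos, Real.sign_of_pos hg, abs_of_pos hg, one_mul, mul_one,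
    Real.mul_rpow hpos.le (by positivity [hx j]), ← Real.rpow_mul (hx j).le,
    sub_one_mul_conjExp_sub_one hp, Real.rpow_one]

end Critical

theorem statement_11_general {m : ℕ} {d : Fin m → ℕ} (hd : ∀ k, 0 < d k)
    (p : Fin m → ℝ) (hp : ∀ k, 1 < p k)
    (f : (∀ i, Fin (d i)) → ℝ) (hf0 : ∀ j, 0 ≤ f j)
    (hwirr : WeaklyIrreducible f)
    (i : Fin m) (hpi : ∀ k, k ≠ i → ((m : ℝ) - 1) * conjExp (p i) ≤ p k) :
    ∃ (lam : ℝ) (x : ∀ l, Fin (d l) → ℝ),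
      (∀ l jl, 0 < x l jl) ∧ IsSingular f p lam x ∧ Qform f p x = tnorm f p := by
  have hp0 : ∀ k, 0 < p k := fun k => zero_lt_one.trans (hp k)
  obtain ⟨xs, hxs, hmax⟩ := exists_isMaxOn_form hd hp0 f
  have hpos := pos_of_isMaxOn_form hp hf0 hwirr hpi hxs hmax
  have hlam : 0 ≤ form f xs := form_nonneg hf0 hxs.1
  refine ⟨form f xs, xs, hpos, ⟨hxs.2, fun l => ?_⟩, ?_⟩
  · exact sigma_eq_of_grad_eq (hp l) hlam (hpos l) (grad_eq_of_isMaxOn_form hp0 hxs hmax hpos l)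
  · rw [Qform_eq_abs_form hxs.2, abs_of_nonneg hlam, tnorm_eq_of_isMaxOn hf0 hp0 hxs hmax]

/-- a nonnegative weakly irreducible tensor with
`(m-1) p_i' ≤ p_k` for all `k ≠ i` has a strictly positive singular vector
attaining the tensor norm. -/
theorem statement_11 {m : ℕ} {d : Fin m → ℕ} (hm : 2 ≤ m) (hd : ∀ k, 0 < d k)
    (p : Fin m → ℝ) (hp : ∀ k, 1 < p k)
    (f : (∀ i, Fin (d i)) → ℝ) (hf0 : ∀ j, 0 ≤ f j)
    (hwirr : WeaklyIrreducible f)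
    (i : Fin m) (hpi : ∀ k, k ≠ i → ((m : ℝ) - 1) * conjExp (p i) ≤ p k) :
    ∃ (lam : ℝ) (x : ∀ l, Fin (d l) → ℝ),
      (∀ l jl, 0 < x l jl) ∧ IsSingular f p lam x ∧ Qform f p x = tnorm f p :=
  statement_11_general hd p hp f hf0 hwirr i hpi

end TensorPF
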